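/- arXiv:1507.08543 — 4 statements merged into one kernel-verified Lean document; each statement's English description precedes it below -/
import Mathlib

section
/- Let d ≥ 4 be an integer and let f = x^{d-1}z + y^d + x^{d-2}yw ∈ ℂ[x,y,z,w]. For every (α, β, γ, δ) ∈ ℂ⁴ with γ ≠ 0, the set of solutions (x,y,z,w) ∈ ℂ⁴ of the system ∂f/∂x = α, ∂f/∂y = β, ∂f/∂z = γ, ∂f/∂w = δ is nonempty and consists of exactly d−1 points, all of which are pairwise proportional (i.e. they all lie on a single line through the origin of ℂ⁴). In particular the fiber of the gradient map over such a point consists of a single point of ℙ³. -/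
/-!
All partial derivatives of `f` are homogeneous of degree `d - 1`, and `∂f/∂z = x^{d-1}`. So a
solution `p` of `∇f(p) = u` with `u₂ ≠ 0` has `x ≠ 0`, and `x⁻¹ • p` solves `∇f = u / u₂` on the
chart `x = 1`. There the equations are triangular (`∂f/∂w` gives `y`, then `∂f/∂y` gives `w`,
then `∂f/∂x` gives `z`), so they have a single solution `v`. Hence the solutions are exactly the
points `x • v` with `x ^ (d - 1) = u₂`: `d - 1` points on the line through `v`.
-/

open MvPolynomial

theorem ncard_setOf_pow_eq {n : ℕ} (hn : 0 < n) {γ : ℂ} (hγ : γ ≠ 0) :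
    {x : ℂ | x ^ n = γ}.ncard = n := by
  have hζ := Complex.isPrimitiveRoot_exp n hn.ne'
  have hset : {x : ℂ | x ^ n = γ} = ↑(Polynomial.nthRoots n γ).toFinset := by
    ext x
    simp [Polynomial.mem_nthRoots hn]
  rw [hset, Set.ncard_coe_finset, Multiset.toFinset_card_of_nodup (hζ.nthRoots_nodup hγ),
    hζ.card_nthRoots, if_pos (IsAlgClosed.exists_pow_nat_eq γ hn)]

theorem MvPolynomial.IsHomogeneous.eval_smul {σ R : Type*} [CommSemiring R]
    {φ : MvPolynomial σ R} {n : ℕ} (h : φ.IsHomogeneous n) (c : R) (p : σ → R) :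
    eval (c • p) φ = c ^ n * eval p φ := by
  conv_lhs => rw [φ.as_sum]
  conv_rhs => rw [φ.as_sum]
  rw [map_sum, map_sum, Finset.mul_sum]
  refine Finset.sum_congr rfl fun s hs => ?_
  have hdeg : s.degree = n := by
    rw [Finsupp.degree_eq_weight_one]
    exact h (mem_support_iff.mp hs)
  simp only [eval_monomial, Pi.smul_apply, smul_eq_mul, mul_pow, Finsupp.prod_mul]
  rw [Finsupp.prod, Finset.prod_pow_eq_pow_sum, ← Finsupp.degree_apply, hdeg]
  ring

section Gradient

variable {σ R : Type*} [CommRing R]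

noncomputable def evalGradient (f : MvPolynomial σ R) (p : σ → R) : σ → R :=
  fun i => eval p (pderiv i f)

theorem MvPolynomial.IsHomogeneous.evalGradient_smul {f : MvPolynomial σ R} {n : ℕ}
    (h : f.IsHomogeneous n) (c : R) (p : σ → R) :
    evalGradient f (c • p) = c ^ (n - 1) • evalGradient f p := by
  funext i
  exact h.pderiv.eval_smul c p

end Gradient

section D''

variable {R : Type*} [CommRing R] {K : Type*} [Field K] [CharZero K]

-- The coordinates `(x, y, z, w)` are `(X 0, X 1, X 2, X 3)`.
noncomputable def D'' (d : ℕ) : MvPolynomial (Fin 4) R :=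
  X 0 ^ (d - 1) * X 2 + X 1 ^ d + X 0 ^ (d - 2) * X 1 * X 3

/-- The unique point with `x = 1` at which the gradient of `D'' d` equals `u`, when `u 2 = 1`. -/
noncomputable def D''.normalPoint (d : ℕ) (u : Fin 4 → K) : Fin 4 → K :=
  let w := u 1 - d * u 3 ^ (d - 1)
  ![1, u 3, (u 0 - (d - 2) * u 3 * w) / (d - 1), w]

variable {d : ℕ}

theorem isHomogeneous_D'' (hd : 2 ≤ d) : (D'' d : MvPolynomial (Fin 4) R).IsHomogeneous d := by
  have h₁ := (isHomogeneous_X_pow (R := R) (0 : Fin 4) (d - 1)).mul (isHomogeneous_X R 2)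
  have h₂ := ((isHomogeneous_X_pow (R := R) (0 : Fin 4) (d - 2)).mul (isHomogeneous_X R 1)).mul
    (isHomogeneous_X R 3)
  rw [show d - 1 + 1 = d by omega] at h₁
  rw [show d - 2 + 1 + 1 = d by omega] at h₂
  exact (h₁.add (isHomogeneous_X_pow 1 d)).add h₂

theorem evalGradient_D'' (p : Fin 4 → R) : evalGradient (D'' d) p =
    ![((d - 1 : ℕ) : R) * p 0 ^ (d - 2) * p 2 + ((d - 2 : ℕ) : R) * p 0 ^ (d - 3) * p 1 * p 3,
      d * p 1 ^ (d - 1) + p 0 ^ (d - 2) * p 3, p 0 ^ (d - 1), p 0 ^ (d - 2) * p 1] := by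
  have h₁ : d - 1 - 1 = d - 2 := by omega
  have h₂ : d - 2 - 1 = d - 3 := by omega
  funext i
  fin_cases i <;> simp [evalGradient, D'', pderiv_X, h₁, h₂] <;> ring

theorem evalGradient_D''_eq_iff (hd : 2 ≤ d) {u q : Fin 4 → K} (hu : u 2 = 1) (hq : q 0 = 1) :
    evalGradient (D'' d) q = u ↔ q = D''.normalPoint d u := by
  have hd₁ : (d : K) - 1 ≠ 0 := by
    rw [sub_ne_zero, Ne, ← Nat.cast_one, Nat.cast_inj]
    omega
  rw [evalGradient_D'', hq, ← List.ofFn_inj, ← List.ofFn_inj]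
  simp only [List.ofFn_succ, List.ofFn_zero, D''.normalPoint, Nat.cast_sub (by omega : 1 ≤ d),
    Nat.cast_sub hd, Nat.cast_one, Nat.cast_ofNat, one_pow, mul_one, one_mul, hu, hq,
    Matrix.cons_val_zero, Matrix.cons_val_succ, Matrix.cons_val_fin_one, Fin.succ_zero_eq_one,
    Fin.succ_one_eq_two, Fin.reduceSucc, List.cons.injEq, and_true, true_and]
  constructor
  · rintro ⟨h₀, h₁, h₃⟩
    have hw : q 3 = u 1 - d * u 3 ^ (d - 1) := by
      rw [← h₃]
      linear_combination h₁
    refine ⟨h₃, ?_, hw⟩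
    rw [eq_div_iff hd₁, ← hw, ← h₃]
    linear_combination h₀
  · rintro ⟨h₃, h₂, hw⟩
    rw [h₂, hw, h₃]
    refine ⟨?_, by ring, rfl⟩
    field_simp
    ring

theorem setOf_evalGradient_D''_eq (hd : 2 ≤ d) {u : Fin 4 → K} (hu : u 2 ≠ 0) :
    {p | evalGradient (D'' d) p = u} =
      (· • D''.normalPoint d ((u 2)⁻¹ • u)) '' {x | x ^ (d - 1) = u 2} := by
  set v := D''.normalPoint d ((u 2)⁻¹ • u)
  have hu' : ((u 2)⁻¹ • u) 2 = 1 := inv_mul_cancel₀ hu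
  have hv : evalGradient (D'' d) v = (u 2)⁻¹ • u := (evalGradient_D''_eq_iff hd hu' rfl).2 rfl
  have homog := isHomogeneous_D'' (R := K) hd
  ext p
  constructor
  · intro (hp : evalGradient (D'' d) p = u)
    have hp₀ : p 0 ^ (d - 1) = u 2 := by simpa [evalGradient_D''] using congrFun hp 2
    have hx : p 0 ≠ 0 := ne_zero_pow (by omega) (hp₀ ▸ hu)
    have hq : (p 0)⁻¹ • p = v := by
      refine (evalGradient_D''_eq_iff hd hu' (inv_mul_cancel₀ hx)).1 ?_
      rw [homog.evalGradient_smul, hp, inv_pow, hp₀]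
    exact ⟨p 0, hp₀, by rw [← hq]; exact smul_inv_smul₀ hx p⟩
  · rintro ⟨x, hx, rfl⟩
    change evalGradient _ (x • v) = u
    rw [homog.evalGradient_smul, hv, hx, smul_smul, mul_inv_cancel₀ hu, one_smul]

end D''

/-- The surface `D''_d : x^{d-1}z + y^d + x^{d-2}yw = 0` is homaloidal: for every point
`(α,β,γ,δ)` with `γ ≠ 0`, the fiber of the gradient map consists of exactly `d-1` points
of `ℂ⁴`, all pairwise proportional (hence a single point of `ℙ³`). -/
theorem stmt0 (d : ℕ) (hd : 4 ≤ d)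
    (f : MvPolynomial (Fin 4) ℂ)
    (hf : f = X 0 ^ (d - 1) * X 2 + X 1 ^ d + X 0 ^ (d - 2) * X 1 * X 3)
    (α β γ δ : ℂ) (hγ : γ ≠ 0)
    (Sol : Set (Fin 4 → ℂ))
    (hSol : Sol = {p | eval p (pderiv 0 f) = α ∧ eval p (pderiv 1 f) = β ∧
        eval p (pderiv 2 f) = γ ∧ eval p (pderiv 3 f) = δ}) :
    Sol.Nonempty ∧ Sol.ncard = d - 1 ∧
      ∀ p ∈ Sol, ∀ q ∈ Sol, ∃ c : ℂ, c ≠ 0 ∧ q = c • p := by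
  have hSol' : Sol = {p | evalGradient (D'' d) p = ![α, β, γ, δ]} := by
    subst hf hSol
    ext p
    simp [evalGradient, D'', funext_iff, Fin.forall_fin_succ]
  have hu : ![α, β, γ, δ] 2 = γ := rfl
  rw [hSol', setOf_evalGradient_D''_eq (by omega) hγ, hu]
  set v := D''.normalPoint d (γ⁻¹ • ![α, β, γ, δ])
  have hinj : Set.InjOn (· • v) {x : ℂ | x ^ (d - 1) = γ} := fun x _ y _ h => by
    simpa [v, D''.normalPoint] using congrFun h 0
  refine ⟨.image _ (IsAlgClosed.exists_pow_nat_eq γ (n := d - 1) (by omega)),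
    by rw [hinj.ncard_image, ncard_setOf_pow_eq (by omega) hγ], ?_⟩
  rintro _ ⟨x, hx, rfl⟩ _ ⟨y, hy, rfl⟩
  have hx₀ : x ≠ 0 := ne_zero_pow (by omega) (hx ▸ hγ)
  exact ⟨y / x, div_ne_zero (ne_zero_pow (by omega) (hy ▸ hγ)) hx₀, by
    simp only [smul_smul, div_mul_cancel₀ y hx₀]⟩
end

section
/- Let d ≥ 5 be an integer and let f = x^{d-1}z + y^d + x^{d-2}yw + x^{d-5}y⁵ ∈ ℂ[x,y,z,w]. For every (α, β, γ, δ) ∈ ℂ⁴ with γ ≠ 0, the solutions (x,y,z,w) ∈ ℂ⁴ of the system (∂f/∂x, ∂f/∂y, ∂f/∂z, ∂f/∂w) = (α, β, γ, δ) form a nonempty set all of whose elements are pairwise proportional. -/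
/-!
The gradient map of a form of degree `d` is homogeneous of degree `d - 1`, so it takes the
same value at `p` and at `c • p` whenever `c ^ (d - 1) = 1`. For `f` the system is triangular
once `x` is fixed: `∂f/∂z = x^(d-1)` fixes `x` up to a `(d-1)`-st root of unity, and then
`∂f/∂w`, `∂f/∂y`, `∂f/∂x` determine `y`, `w`, `z` in turn, each linearly with leading
coefficient a nonzero multiple of a power of `x`. Hence the fibres over `γ ≠ 0` are nonempty
and consist of the points `c • p` with `c ^ (d - 1) = 1`.
-/

open MvPolynomial

namespace MvPolynomial

variable {σ R : Type*} [CommSemiring R]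

theorem IsHomogeneous.eval_smul_s2 {φ : MvPolynomial σ R} {n : ℕ} (hφ : φ.IsHomogeneous n)
    (c : R) (p : σ → R) : eval (c • p) φ = c ^ n * eval p φ := by
  simp only [eval_eq, Finset.mul_sum]
  refine Finset.sum_congr rfl fun s hs => ?_
  have hdeg : ∑ i ∈ s.support, s i = n := by
    simpa [Finsupp.weight_apply, Finsupp.sum] using hφ (mem_support_iff.mp hs)
  simp only [Pi.smul_apply, smul_eq_mul, mul_pow, Finset.prod_mul_distrib,
    Finset.prod_pow_eq_pow_sum, hdeg]
  ring

noncomputable def gradientMap (φ : MvPolynomial σ R) (p : σ → R) : σ → R :=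
  fun i => eval p (pderiv i φ)

theorem IsHomogeneous.gradientMap_smul {φ : MvPolynomial σ R} {n : ℕ} (hφ : φ.IsHomogeneous n)
    (c : R) (p : σ → R) : gradientMap φ (c • p) = c ^ (n - 1) • gradientMap φ p :=
  _root_.funext fun _ => hφ.pderiv.eval_smul_s2 c p

end MvPolynomial

/-- The equation of the surface `D'_d`, in the variables `(x, y, z, w) = (X 0, X 1, X 2, X 3)`. -/
noncomputable def homaloidalPoly (K : Type*) [CommRing K] (d : ℕ) : MvPolynomial (Fin 4) K :=
  X 0 ^ (d - 1) * X 2 + X 1 ^ d + X 0 ^ (d - 2) * X 1 * X 3 + X 0 ^ (d - 5) * X 1 ^ 5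

section
variable {K : Type*} {d : ℕ}

theorem isHomogeneous_homaloidalPoly [CommRing K] (hd : 5 ≤ d) :
    (homaloidalPoly K d).IsHomogeneous d := by
  have h1 : d - 1 + 1 = d := by omega
  have h2 : d - 2 + 1 + 1 = d := by omega
  have h5 : d - 5 + 5 = d := by omega
  unfold homaloidalPoly
  refine IsHomogeneous.add (IsHomogeneous.add (IsHomogeneous.add ?_ ?_) ?_) ?_
  · exact h1 ▸ ((isHomogeneous_X_pow _ _).mul (isHomogeneous_X _ _))
  · exact isHomogeneous_X_pow _ _
  · exact h2 ▸ (((isHomogeneous_X_pow _ _).mul (isHomogeneous_X _ _)).mul (isHomogeneous_X _ _))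
  · exact h5 ▸ ((isHomogeneous_X_pow _ _).mul (isHomogeneous_X_pow _ _))

theorem gradientMap_homaloidalPoly [CommRing K] (p : Fin 4 → K) :
    gradientMap (homaloidalPoly K d) p =
      ![((d - 1 : ℕ) : K) * p 0 ^ (d - 2) * p 2 + ((d - 2 : ℕ) : K) * p 0 ^ (d - 3) * p 1 * p 3
          + ((d - 5 : ℕ) : K) * p 0 ^ (d - 6) * p 1 ^ 5,
        d * p 1 ^ (d - 1) + p 0 ^ (d - 2) * p 3 + 5 * p 0 ^ (d - 5) * p 1 ^ 4,
        p 0 ^ (d - 1),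
        p 0 ^ (d - 2) * p 1] := by
  ext i
  fin_cases i <;> simp [gradientMap, homaloidalPoly, pderiv_X, Nat.sub_sub] <;> ring_nf
end

section
variable {K : Type*} [Field K] {d : ℕ}

theorem eq_of_gradientMap_homaloidalPoly_eq [CharZero K] (hd : 5 ≤ d) {p q : Fin 4 → K}
    (hpq : gradientMap (homaloidalPoly K d) p = gradientMap (homaloidalPoly K d) q)
    (h0 : p 0 = q 0) (hp0 : p 0 ≠ 0) : p = q := by
  simp only [gradientMap_homaloidalPoly, ← h0] at hpq
  have e0 := congrFun hpq 0
  have e1 := congrFun hpq 1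
  have e3 := congrFun hpq 3
  simp only [Matrix.cons_val] at e0 e1 e3
  have hx : p 0 ^ (d - 2) ≠ 0 := pow_ne_zero _ hp0
  have h1 : p 1 = q 1 := mul_left_cancel₀ hx e3
  have h3 : p 3 = q 3 := mul_left_cancel₀ hx (by rw [h1] at e1; linear_combination e1)
  have hd1 : ((d - 1 : ℕ) : K) ≠ 0 := Nat.cast_ne_zero.mpr (by omega)
  have h2 : p 2 = q 2 :=
    mul_left_cancel₀ (mul_ne_zero hd1 hx) (by rw [h1, h3] at e0; linear_combination e0)
  ext i
  fin_cases i <;> assumption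

theorem exists_smul_eq_of_gradientMap_homaloidalPoly_eq [CharZero K] (hd : 5 ≤ d)
    {p q : Fin 4 → K}
    (hpq : gradientMap (homaloidalPoly K d) p = gradientMap (homaloidalPoly K d) q)
    (h2 : gradientMap (homaloidalPoly K d) p 2 ≠ 0) : ∃ c : K, c ≠ 0 ∧ q = c • p := by
  have hpow : p 0 ^ (d - 1) = q 0 ^ (d - 1) := by
    simpa [gradientMap_homaloidalPoly] using congrFun hpq 2
  have hp0 : p 0 ≠ 0 := fun h => h2 (by simp [gradientMap_homaloidalPoly, h]; omega)
  set c := q 0 / p 0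
  have hc : c ^ (d - 1) = 1 := by rw [div_pow, ← hpow, div_self (pow_ne_zero _ hp0)]
  have hq0 : q 0 ≠ 0 := fun h => hp0 (by simpa [h, show d - 1 ≠ 0 by omega] using hpow)
  have hc0 : c ≠ 0 := div_ne_zero hq0 hp0
  refine ⟨c, hc0, (eq_of_gradientMap_homaloidalPoly_eq (p := c • p) hd ?_ ?_
    (smul_ne_zero hc0 hp0)).symm⟩
  · rw [(isHomogeneous_homaloidalPoly hd).gradientMap_smul, hc, one_smul, hpq]
  · simp [c, hp0]

theorem exists_gradientMap_homaloidalPoly_eq [CharZero K] [IsAlgClosed K] (hd : 5 ≤ d)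
    {v : Fin 4 → K} (hv : v 2 ≠ 0) : ∃ p, gradientMap (homaloidalPoly K d) p = v := by
  obtain ⟨x, hx⟩ := IsAlgClosed.exists_pow_nat_eq (v 2) (n := d - 1) (by omega)
  have hx0 : x ≠ 0 := by rintro rfl; exact hv (by simpa [show d - 1 ≠ 0 by omega] using hx.symm)
  set y := v 3 / x ^ (d - 2)
  set w := (v 1 - d * y ^ (d - 1) - 5 * x ^ (d - 5) * y ^ 4) / x ^ (d - 2)
  set z := (v 0 - ((d - 2 : ℕ) : K) * x ^ (d - 3) * y * w
      - ((d - 5 : ℕ) : K) * x ^ (d - 6) * y ^ 5) / (((d - 1 : ℕ) : K) * x ^ (d - 2))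
  refine ⟨![x, y, z, w], ?_⟩
  have hd1 : ((d - 1 : ℕ) : K) ≠ 0 := Nat.cast_ne_zero.mpr (by omega)
  ext i
  fin_cases i <;> simp [gradientMap_homaloidalPoly, hx, y, w, z] <;> field_simp <;> ring
end

/-- The surface `D'_d : x^{d-1}z + y^d + x^{d-2}yw + x^{d-5}y⁵ = 0` is homaloidal. -/
theorem stmt2 (d : ℕ) (hd : 5 ≤ d)
    (f : MvPolynomial (Fin 4) ℂ)
    (hf : f = X 0 ^ (d - 1) * X 2 + X 1 ^ d + X 0 ^ (d - 2) * X 1 * X 3 +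
        X 0 ^ (d - 5) * X 1 ^ 5)
    (α β γ δ : ℂ) (hγ : γ ≠ 0)
    (Sol : Set (Fin 4 → ℂ))
    (hSol : Sol = {p | eval p (pderiv 0 f) = α ∧ eval p (pderiv 1 f) = β ∧
        eval p (pderiv 2 f) = γ ∧ eval p (pderiv 3 f) = δ}) :
    Sol.Nonempty ∧ ∀ p ∈ Sol, ∀ q ∈ Sol, ∃ c : ℂ, c ≠ 0 ∧ q = c • p := by
  replace hSol : Sol = gradientMap (homaloidalPoly ℂ d) ⁻¹' {![α, β, γ, δ]} := by
    ext p
    simp [hSol, hf, homaloidalPoly, gradientMap, funext_iff, Fin.forall_fin_succ]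
  subst hSol
  refine ⟨exists_gradientMap_homaloidalPoly_eq hd (v := ![α, β, γ, δ]) hγ, ?_⟩
  intro p hp q hq
  exact exists_smul_eq_of_gradientMap_homaloidalPoly_eq hd (hp.trans hq.symm)
    (by rw [hp]; exact hγ)
end

section
/- Let n ≥ 1 and let d₁, …, dₙ and e₁, …, eₙ be positive integers. Define Q(x) = Σ_{j=1}^{n} binom(x − d_j, n) and Q'(x) = Σ_{j=1}^{n} binom(x − e_j, n), where binom(y, n) denotes the polynomial y(y−1)⋯(y−n+1)/n! in the variable y. If Q = Q' as polynomials in x, then the multisets {d₁, …, dₙ} and {e₁, …, eₙ} coincide. -/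
/-!
Up to the factor `n!`, `binom(x - d, n)` is `descPochhammer n` composed with `X - d`. The forward
difference `p ↦ p(X + 1) - p` sends `descPochhammer (m + 1) (X - d)` to
`(m + 1) • descPochhammer m (X - d)`, so the hypothesis descends to every level `m ≤ n`.
Evaluating at `0` and using that the `descPochhammer m` form a triangular basis, the power sums
`∑ⱼ dⱼ ^ m` and `∑ⱼ eⱼ ^ m` agree for `m ≤ n`. By Newton's identities so do the elementary
symmetric functions, hence the polynomials `∏ⱼ (X - dⱼ)` and `∏ⱼ (X - eⱼ)` and their roots.
-/

open Polynomial Finset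

section DescPochhammer

variable {R : Type*} [CommRing R]

theorem prod_range_X_sub_C_add_eq_descPochhammer_comp (c : R) (m : ℕ) :
    ∏ k ∈ range m, (X - C (c + k)) = (descPochhammer R m).comp (X - C c) := by
  induction m with
  | zero => simp
  | succ m ih =>
    rw [prod_range_succ, ih, descPochhammer_succ_right, mul_comp]
    simp only [sub_comp, X_comp, natCast_comp, C_add, C_eq_natCast]
    ring

theorem descPochhammer_succ_comp_X_add_one_sub (m : ℕ) :
    (descPochhammer R (m + 1)).comp (X + 1) - descPochhammer R (m + 1)
      = (m + 1 : R[X]) * descPochhammer R m := by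
  nth_rw 1 [descPochhammer_succ_left]
  rw [descPochhammer_succ_right, mul_comp, comp_assoc]
  simp only [X_comp, sub_comp, one_comp, add_sub_cancel_right, comp_X]
  ring

theorem descPochhammer_succ_comp_X_sub_C_comp_X_add_one_sub (c : R) (m : ℕ) :
    ((descPochhammer R (m + 1)).comp (X - C c)).comp (X + 1)
        - (descPochhammer R (m + 1)).comp (X - C c)
      = (m + 1 : R[X]) * (descPochhammer R m).comp (X - C c) := by
  have hshift : (X - C c).comp (X + 1) = (X + 1 : R[X]).comp (X - C c) := by
    simp only [sub_comp, add_comp, X_comp, C_comp, one_comp]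
    ring
  rw [comp_assoc, hshift, ← comp_assoc, ← sub_comp, descPochhammer_succ_comp_X_add_one_sub,
    mul_comp]
  simp

variable {ι : Type*} [Fintype ι] [IsDomain R]

theorem sum_descPochhammer_comp_eq_of_le [CharZero R] {x y : ι → R} {m n : ℕ} (hmn : m ≤ n)
    (h : ∑ i, (descPochhammer R n).comp (X - C (x i))
      = ∑ i, (descPochhammer R n).comp (X - C (y i))) :
    ∑ i, (descPochhammer R m).comp (X - C (x i))
      = ∑ i, (descPochhammer R m).comp (X - C (y i)) := by
  induction hmn using Nat.decreasingInduction with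
  | self => exact h
  | of_succ k _ ih =>
    have hdiff := congrArg (fun p : R[X] => p.comp (X + 1) - p) ih
    simp only [Polynomial.sum_comp, ← sum_sub_distrib, ← mul_sum,
      descPochhammer_succ_comp_X_sub_C_comp_X_add_one_sub] at hdiff
    exact mul_left_cancel₀ (Nat.cast_add_one_ne_zero k) hdiff

theorem sum_eval_eq_of_forall_sum_descPochhammer_eval_eq {x y : ι → R} {n : ℕ}
    (h : ∀ m ≤ n, ∑ i, (descPochhammer R m).eval (x i) = ∑ i, (descPochhammer R m).eval (y i))
    {f : R[X]} (hf : f.natDegree ≤ n) :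
    ∑ i, f.eval (x i) = ∑ i, f.eval (y i) := by
  induction n generalizing f with
  | zero => rw [eq_C_of_natDegree_le_zero hf]; simp
  | succ n ih =>
    set a := f.coeff (n + 1)
    have hlow : (f - C a * descPochhammer R (n + 1)).natDegree ≤ n := by
      rw [natDegree_le_iff_coeff_eq_zero]
      intro N hN
      rcases (Nat.succ_le_of_lt hN).eq_or_lt with rfl | hN
      · have hlead : (descPochhammer R (n + 1)).coeff (n + 1) = 1 := by
          simpa using (monic_descPochhammer R (n + 1)).coeff_natDegree
        simp [a, hlead]
      · rw [coeff_sub, coeff_C_mul, coeff_eq_zero_of_natDegree_lt (hf.trans_lt hN),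
          coeff_eq_zero_of_natDegree_lt (by rwa [descPochhammer_natDegree])]
        simp
    have hsplit : ∀ z : ι → R, ∑ i, f.eval (z i)
        = ∑ i, (f - C a * descPochhammer R (n + 1)).eval (z i)
          + a * ∑ i, (descPochhammer R (n + 1)).eval (z i) := by
      intro z
      simp only [eval_sub, eval_mul, eval_C, mul_sum, ← sum_add_distrib, sub_add_cancel]
    rw [hsplit x, hsplit y, ih (fun m hm => h m (hm.trans n.le_succ)) hlow, h (n + 1) le_rfl]

theorem sum_pow_eq_of_sum_descPochhammer_comp_eq [CharZero R] {x y : ι → R} {n : ℕ}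
    (h : ∑ i, (descPochhammer R n).comp (X - C (x i))
      = ∑ i, (descPochhammer R n).comp (X - C (y i)))
    {m : ℕ} (hm : m ≤ n) :
    ∑ i, x i ^ m = ∑ i, y i ^ m := by
  have hvals : ∀ k ≤ n, ∑ i, (descPochhammer R k).eval (-x i)
      = ∑ i, (descPochhammer R k).eval (-y i) := fun k hk => by
    simpa [eval_finsetSum] using congrArg (eval 0) (sum_descPochhammer_comp_eq_of_le hk h)
  simpa using sum_eval_eq_of_forall_sum_descPochhammer_eval_eq hvals (f := (-X) ^ m)
    (by simpa using hm)

end DescPochhammer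

section PowerSums

variable {R : Type*} [CommRing R] [IsDomain R]

theorem Multiset.eq_of_esymm_eq {s t : Multiset R} (hcard : Multiset.card s = Multiset.card t)
    (h : ∀ k ≤ Multiset.card s, s.esymm k = t.esymm k) : s = t := by
  have hprod : (s.map fun a => X - C a).prod = (t.map fun a => X - C a).prod := by
    rw [Multiset.prod_X_sub_X_eq_sum_esymm, Multiset.prod_X_sub_X_eq_sum_esymm, ← hcard]
    exact sum_congr rfl fun k hk => by rw [h k (Nat.lt_succ_iff.mp (mem_range.mp hk))]
  simpa only [roots_multiset_prod_X_sub_C] using congrArg roots hprod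

variable {ι : Type*} [Fintype ι] [CharZero R]

theorem esymm_map_univ_eq_of_sum_pow_eq {x y : ι → R} {n : ℕ}
    (h : ∀ m ≤ n, ∑ i, x i ^ m = ∑ i, y i ^ m) {k : ℕ} (hk : k ≤ n) :
    (univ.val.map x).esymm k = (univ.val.map y).esymm k := by
  induction k using Nat.strong_induction_on with
  | _ k ih =>
    rcases k.eq_zero_or_pos with rfl | hk0
    · simp [Multiset.esymm]
    have newton : ∀ z : ι → R, (k : R) * (univ.val.map z).esymm k = (-1) ^ (k + 1) *
        ∑ a ∈ antidiagonal k with a.1 < k,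
          (-1) ^ a.1 * (univ.val.map z).esymm a.1 * ∑ i, z i ^ a.2 := fun z => by
      simpa only [map_mul, map_pow, map_neg, map_one, map_natCast, map_sum, MvPolynomial.aeval_X,
        MvPolynomial.aeval_esymm_eq_multiset_esymm, MvPolynomial.psum] using
        congrArg (MvPolynomial.aeval z) (MvPolynomial.mul_esymm_eq_sum ι R k)
    refine mul_left_cancel₀ (Nat.cast_ne_zero.mpr hk0.ne') ?_
    rw [newton x, newton y]
    congr 1
    refine sum_congr rfl fun a ha => ?_
    obtain ⟨hsum, hlt⟩ := mem_filter.mp ha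
    rw [HasAntidiagonal.mem_antidiagonal] at hsum
    rw [ih a.1 hlt (hlt.le.trans hk), h a.2 (by omega)]

theorem map_univ_eq_of_sum_pow_eq {x y : ι → R}
    (h : ∀ m ≤ Fintype.card ι, ∑ i, x i ^ m = ∑ i, y i ^ m) :
    univ.val.map x = univ.val.map y :=
  Multiset.eq_of_esymm_eq (by simp) fun _ hk =>
    esymm_map_univ_eq_of_sum_pow_eq h (by simpa using hk)

end PowerSums

theorem exists_perm_of_map_univ_eq {ι α : Type*} [Fintype ι] [DecidableEq α] {d e : ι → α}
    (h : univ.val.map d = univ.val.map e) : ∃ σ : Equiv.Perm ι, ∀ i, e i = d (σ i) := by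
  have hfiber : ∀ a, Fintype.card {i // e i = a} = Fintype.card {i // d i = a} := fun a => by
    simpa [Fintype.card_subtype, Multiset.count_map, card_def, filter_val, eq_comm] using
      (congrArg (Multiset.count a) h).symm
  exact ⟨Equiv.ofFiberEquiv fun a => Fintype.equivOfCardEq (hfiber a),
    fun i => (Equiv.ofFiberEquiv_map _ i).symm⟩

theorem stmt10_general (n : ℕ) (d e : Fin n → ℕ)
    (h : (∑ j, (Polynomial.C ((n.factorial : ℚ)⁻¹)) *
            ∏ k ∈ Finset.range n, (Polynomial.X - Polynomial.C ((d j : ℚ) + k)))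
       = ∑ j, (Polynomial.C ((n.factorial : ℚ)⁻¹)) *
            ∏ k ∈ Finset.range n, (Polynomial.X - Polynomial.C ((e j : ℚ) + k))) :
    ∃ σ : Equiv.Perm (Fin n), ∀ i, e i = d (σ i) := by
  have hC : C ((n.factorial : ℚ)⁻¹) ≠ 0 := by simp [n.factorial_ne_zero]
  have hdesc : ∑ j, (descPochhammer ℚ n).comp (X - C (d j : ℚ))
      = ∑ j, (descPochhammer ℚ n).comp (X - C (e j : ℚ)) := by
    rw [← mul_sum, ← mul_sum] at h
    simpa only [prod_range_X_sub_C_add_eq_descPochhammer_comp] using mul_left_cancel₀ hC h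
  have hcast : univ.val.map (fun j => (d j : ℚ)) = univ.val.map (fun j => (e j : ℚ)) :=
    map_univ_eq_of_sum_pow_eq fun m hm =>
      sum_pow_eq_of_sum_descPochhammer_comp_eq hdesc (by simpa using hm)
  refine exists_perm_of_map_univ_eq (Multiset.map_injective (Nat.cast_injective (R := ℚ)) ?_)
  simpa only [Multiset.map_map, Function.comp_def] using hcast

/-- If `Q(x) = Σ_j binom(x − d_j, n)` and `Q'(x) = Σ_j binom(x − e_j, n)` agree as
polynomials, where the `d_j`, `e_j` are positive integers, then the multisets
`{d_j}` and `{e_j}` coincide. -/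
theorem stmt10 (n : ℕ) (hn : 1 ≤ n) (d e : Fin n → ℕ)
    (hd : ∀ i, 0 < d i) (he : ∀ i, 0 < e i)
    (h : (∑ j, (Polynomial.C ((n.factorial : ℚ)⁻¹)) *
            ∏ k ∈ Finset.range n, (Polynomial.X - Polynomial.C ((d j : ℚ) + k)))
       = ∑ j, (Polynomial.C ((n.factorial : ℚ)⁻¹)) *
            ∏ k ∈ Finset.range n, (Polynomial.X - Polynomial.C ((e j : ℚ) + k))) :
    ∃ σ : Equiv.Perm (Fin n), ∀ i, e i = d (σ i) :=
  stmt10_general n d e h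
end

section
/- Let Δ₃ = y²z² − 4xz³ − 4y³w + 18xyzw − 27x²w² ∈ ℂ[x,y,z,w]. For every point p = (α, β, γ, δ) ∈ ℂ⁴ outside a proper Zariski-closed subset, all solutions (x,y,z,w) ∈ ℂ⁴ of the system (∂Δ₃/∂x, ∂Δ₃/∂y, ∂Δ₃/∂z, ∂Δ₃/∂w) = (α, β, γ, δ) are pairwise proportional; that is, the gradient map of Δ₃ is a birational self-map of ℙ³ (degree one onto its image, which is dense). -/
/-!
The cubic covariant `ψ` of the binary cubic inverts the gradient map `φ` of the discriminant
up to a scalar: `ψ (φ p) = -216 Δ(p)² • p`. So if `φ p = φ q = v` and `ψ v ≠ 0`, then `p` and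
`q` are both nonzero multiples of `ψ v`.
-/

open MvPolynomial

theorem eq_smul_of_apply_eq_of_comp_eq_smul {K V W : Type*} [Field K] [AddCommGroup V]
    [Module K V] {φ : V → W} {ψ : W → V} {L : V → K} (hψφ : ∀ p, ψ (φ p) = L p • p)
    {p q : V} (hpq : φ p = φ q) (hne : ψ (φ p) ≠ 0) : ∃ c : K, c ≠ 0 ∧ q = c • p := by
  have hL : ∀ r, ψ (φ r) ≠ 0 → L r ≠ 0 := fun r hr h => hr (by rw [hψφ, h, zero_smul])
  have hLp := hL p hne
  have hLq := hL q (hpq ▸ hne)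
  have hLpq : L q • q = L p • p := by rw [← hψφ, ← hψφ, hpq]
  refine ⟨(L q)⁻¹ * L p, mul_ne_zero (inv_ne_zero hLq) hLp, ?_⟩
  rw [mul_smul, ← hLpq, inv_smul_smul₀ hLq]

section BinaryCubic

variable {R : Type*} [CommRing R]

noncomputable def binaryCubicDisc : MvPolynomial (Fin 4) R :=
  X 1 ^ 2 * X 2 ^ 2 - 4 * X 0 * X 2 ^ 3 - 4 * X 1 ^ 3 * X 3 +
    18 * X 0 * X 1 * X 2 * X 3 - 27 * X 0 ^ 2 * X 3 ^ 2

def binaryCubicDiscGrad (r : Fin 4 → R) : Fin 4 → R :=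
  ![-4 * r 2 ^ 3 + 18 * r 1 * r 2 * r 3 - 54 * r 0 * r 3 ^ 2,
    2 * r 1 * r 2 ^ 2 - 12 * r 1 ^ 2 * r 3 + 18 * r 0 * r 2 * r 3,
    2 * r 1 ^ 2 * r 2 - 12 * r 0 * r 2 ^ 2 + 18 * r 0 * r 1 * r 3,
    -4 * r 1 ^ 3 + 18 * r 0 * r 1 * r 2 - 54 * r 0 ^ 2 * r 3]

/-- The classical cubic covariant of a binary cubic, up to the order and signs of its
coefficients. -/
def cubicCovariant (v : Fin 4 → R) : Fin 4 → R :=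
  ![2 * v 2 ^ 3 - 3 * v 1 * v 2 * v 3 + v 0 * v 3 ^ 2,
    -3 * v 1 * v 2 ^ 2 + 6 * v 1 ^ 2 * v 3 - 3 * v 0 * v 2 * v 3,
    -3 * v 1 ^ 2 * v 2 + 6 * v 0 * v 2 ^ 2 - 3 * v 0 * v 1 * v 3,
    2 * v 1 ^ 3 - 3 * v 0 * v 1 * v 2 + v 0 ^ 2 * v 3]

theorem eval_pderiv_binaryCubicDisc (r : Fin 4 → R) (i : Fin 4) :
    eval r (pderiv i binaryCubicDisc) = binaryCubicDiscGrad r i := by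
  fin_cases i <;>
    simp [binaryCubicDisc, binaryCubicDiscGrad, ← map_ofNat C, pderiv_X] <;> ring

theorem cubicCovariant_binaryCubicDiscGrad (r : Fin 4 → R) :
    cubicCovariant (binaryCubicDiscGrad r) = (-216 * eval r binaryCubicDisc ^ 2) • r := by
  funext i
  fin_cases i <;> simp [cubicCovariant, binaryCubicDiscGrad, binaryCubicDisc] <;> ring

end BinaryCubic

noncomputable def cubicCovariant₀ : MvPolynomial (Fin 4) ℂ :=
  2 * X 2 ^ 3 - 3 * X 1 * X 2 * X 3 + X 0 * X 3 ^ 2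

theorem eval_cubicCovariant₀ (v : Fin 4 → ℂ) :
    eval v cubicCovariant₀ = cubicCovariant v 0 := by
  simp [cubicCovariant₀, cubicCovariant]

theorem cubicCovariant₀_ne_zero : cubicCovariant₀ ≠ 0 := fun h => by
  simpa [eval_cubicCovariant₀, cubicCovariant] using congrArg (eval ![(1 : ℂ), 0, 0, 1]) h

/-- The discriminant quartic `Δ₃ = 0` is homaloidal: outside a proper Zariski-closed
subset of `ℂ⁴` (the zero set of some nonzero polynomial `g`), all solutions of
`grad Δ₃ = (α,β,γ,δ)` are pairwise proportional, i.e. the gradient map of `Δ₃` is a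
birational self-map of `ℙ³`. -/
theorem stmt15 (Δ : MvPolynomial (Fin 4) ℂ)
    (hΔ : Δ = X 1 ^ 2 * X 2 ^ 2 - 4 * X 0 * X 2 ^ 3 - 4 * X 1 ^ 3 * X 3 +
        18 * X 0 * X 1 * X 2 * X 3 - 27 * X 0 ^ 2 * X 3 ^ 2) :
    ∃ g : MvPolynomial (Fin 4) ℂ, g ≠ 0 ∧
      ∀ v : Fin 4 → ℂ, eval v g ≠ 0 →
        ∀ p q : Fin 4 → ℂ,
          (∀ i : Fin 4, eval p (pderiv i Δ) = v i) →
          (∀ i : Fin 4, eval q (pderiv i Δ) = v i) →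
          ∃ c : ℂ, c ≠ 0 ∧ q = c • p := by
  have hgrad : ∀ r, (fun i => eval r (pderiv i Δ)) = binaryCubicDiscGrad r := fun r => by
    funext i; rw [hΔ]; exact eval_pderiv_binaryCubicDisc r i
  refine ⟨cubicCovariant₀, cubicCovariant₀_ne_zero, fun v hv p q hp hq => ?_⟩
  have hpv : binaryCubicDiscGrad p = v := by rw [← hgrad]; exact funext hp
  have hqv : binaryCubicDiscGrad q = v := by rw [← hgrad]; exact funext hq
  refine eq_smul_of_apply_eq_of_comp_eq_smul cubicCovariant_binaryCubicDiscGrad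
    (hpv.trans hqv.symm) fun h => hv ?_
  rw [eval_cubicCovariant₀, ← hpv, h, Pi.zero_apply]
end
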